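/- Let α_1 < ... < α_n (n ≥ 2), 2 ≤ k ≤ n, and let i_1 < i_2 < ... < i_{k-1} be indices of the k-1 largest gaps α_{i+1} - α_i. Then the k-partition S_j = {v_{i_{j-1}+1},...,v_{i_j}} (with i_0 = 0, i_k = n) minimizes Σ_{j=1}^k range(S_j) over all k-partitions of V. -/

import Mathlib

open Finset

noncomputable def rng {n : ℕ} (α : Fin n → ℝ) (S : Finset (Fin n)) : ℝ :=
  if h : S.Nonempty then S.sup' h α - S.inf' h α else 0

def IsPartition {n k : ℕ} (P : Fin k → Finset (Fin n)) : Prop :=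
  (∀ i, (P i).Nonempty) ∧ (∀ i j, i ≠ j → Disjoint (P i) (P j)) ∧
    (∀ v : Fin n, ∃ i, v ∈ P i)

/-- The gap `α_{t+1} - α_t` (0-based `t`). -/
noncomputable def gap {n : ℕ} (α : Fin n → ℝ) (t : ℕ) : ℝ :=
  if h : t + 1 < n then α ⟨t + 1, h⟩ - α ⟨t, by omega⟩ else 0

/-!
For monotone `α` the range of a block `B` is the sum of the gaps at the positions
`min B ≤ t < max B`. A position `t < n` that lies in no such interval is the maximum of the block
containing it, so a `k`-partition leaves at most `k` positions uncovered, and `n - 1` (whose gap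
is `0` by convention) is always one of them. Hence `∑ⱼ range Qⱼ` is at least the total of all
gaps minus the gaps at no more than `k - 1` other positions; by an exchange argument this is at least
the total minus the `k - 1` gaps at the cuts, which is exactly the value of the cut partition.
-/

section Gaps

variable {n : ℕ} {α : Fin n → ℝ}

lemma gap_nonneg (hα : Monotone α) (t : ℕ) : 0 ≤ gap α t := by
  unfold gap
  split_ifs
  · exact sub_nonneg.2 (hα (Fin.mk_le_mk.2 (Nat.le_succ t)))
  · exact le_rfl

lemma sum_gap_Ico {a b : Fin n} (hab : a ≤ b) :
    ∑ t ∈ Ico (a : ℕ) b, gap α t = α b - α a := by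
  obtain ⟨b, hb⟩ := b
  change (a : ℕ) ≤ b at hab
  induction b, hab using Nat.le_induction with
  | base => simp
  | succ m hm ih =>
    rw [sum_Ico_succ_top hm, ih (by omega), gap, dif_pos hb]
    ring

lemma rng_eq_of_isLeast_of_isGreatest (hα : Monotone α) {S : Finset (Fin n)} {a b : Fin n}
    (ha : IsLeast (S : Set (Fin n)) a) (hb : IsGreatest (S : Set (Fin n)) b) :
    rng α S = α b - α a := by
  rw [rng, dif_pos ⟨a, ha.1⟩]
  congr 1
  · exact le_antisymm (sup'_le _ _ fun v hv => hα (hb.2 hv)) (le_sup' α hb.1)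
  · exact le_antisymm (inf'_le α ha.1) (le_inf' _ _ fun v hv => hα (ha.2 hv))

lemma rng_eq_sum_gap (hα : Monotone α) {S : Finset (Fin n)} (hS : S.Nonempty) :
    rng α S = ∑ t ∈ Ico ((S.min' hS) : ℕ) (S.max' hS), gap α t := by
  rw [sum_gap_Ico (min'_le _ _ (max'_mem S hS)),
    rng_eq_of_isLeast_of_isGreatest hα (isLeast_min' S hS) (isGreatest_max' S hS)]

end Gaps

lemma sum_biUnion_le_sum_sum {ι β M : Type*} [DecidableEq β] [AddCommMonoid M] [PartialOrder M]
    [IsOrderedAddMonoid M] (s : Finset ι) (t : ι → Finset β) {g : β → M} (hg : ∀ x, 0 ≤ g x) :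
    ∑ x ∈ s.biUnion t, g x ≤ ∑ i ∈ s, ∑ x ∈ t i, g x := by
  classical
  induction s using Finset.induction_on with
  | empty => simp
  | insert i s hi ih =>
    rw [biUnion_insert, sum_insert hi]
    calc ∑ x ∈ t i ∪ s.biUnion t, g x
        ≤ ∑ x ∈ t i ∪ s.biUnion t, g x + ∑ x ∈ t i ∩ s.biUnion t, g x :=
          le_add_of_nonneg_right (sum_nonneg fun x _ => hg x)
      _ = ∑ x ∈ t i, g x + ∑ x ∈ s.biUnion t, g x := sum_union_inter
      _ ≤ _ := by gcongr

lemma sum_le_sum_of_card_le_of_le {ι M : Type*} [DecidableEq ι] [AddCommMonoid M] [LinearOrder M]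
    [IsOrderedAddMonoid M] {U C : Finset ι} {g : ι → M} (hcard : #U ≤ #C)
    (hg : ∀ c ∈ C \ U, 0 ≤ g c) (hle : ∀ u ∈ U \ C, ∀ c ∈ C \ U, g u ≤ g c) :
    ∑ x ∈ U, g x ≤ ∑ x ∈ C, g x := by
  rw [← sum_inter_add_sum_sdiff U C, ← sum_inter_add_sum_sdiff C U, inter_comm]
  refine add_le_add le_rfl ?_
  have hcard' : #(U \ C) ≤ #(C \ U) := card_sdiff_le_card_sdiff_iff.2 hcard
  rcases (C \ U).eq_empty_or_nonempty with hCU | hCU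
  · rw [hCU, card_empty, Nat.le_zero, card_eq_zero] at hcard'
    simp [hcard', hCU]
  obtain ⟨c₀, hc₀, hmin⟩ := exists_min_image (C \ U) g hCU
  calc ∑ x ∈ U \ C, g x ≤ #(U \ C) • g c₀ := sum_le_card_nsmul _ _ _ fun u hu => hle u hu c₀ hc₀
    _ ≤ #(C \ U) • g c₀ := nsmul_le_nsmul_left (hg c₀ hc₀) hcard'
    _ ≤ ∑ x ∈ C \ U, g x := card_nsmul_le_sum _ _ _ hmin

/-- Stated with partial sums on the right so that only `e j ≤ e (j + 1)` is needed. -/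
lemma sum_range_sum_Ico_eq {G : Type*} [AddCommGroup G] (f : ℕ → G) {e : ℕ → ℕ} {k : ℕ}
    (he : ∀ j < k, e j ≤ e (j + 1)) :
    ∑ j ∈ range k, ∑ i ∈ Ico (e j) (e (j + 1)), f i =
      ∑ i ∈ range (e k), f i - ∑ i ∈ range (e 0), f i := by
  rw [← sum_range_sub (fun j => ∑ i ∈ range (e j), f i)]
  exact sum_congr rfl fun j hj => sum_Ico_eq_sub f (he j (mem_range.1 hj))

section Covered

variable {ι : Type*} [Fintype ι] {n : ℕ}

/-- Gap positions `t` (between `t` and `t + 1`) inside the span `[min, max]` of some block. -/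
def covered (Q : ι → Finset (Fin n)) (hQ : ∀ j, (Q j).Nonempty) : Finset ℕ :=
  univ.biUnion fun j => Ico ((Q j).min' (hQ j) : ℕ) ((Q j).max' (hQ j))

lemma sum_gap_covered_le {α : Fin n → ℝ} (hα : Monotone α) (Q : ι → Finset (Fin n))
    (hQ : ∀ j, (Q j).Nonempty) : ∑ t ∈ covered Q hQ, gap α t ≤ ∑ j, rng α (Q j) := by
  simp only [rng_eq_sum_gap hα (hQ _)]
  exact sum_biUnion_le_sum_sum _ _ (gap_nonneg hα)

lemma covered_subset_range (Q : ι → Finset (Fin n)) (hQ : ∀ j, (Q j).Nonempty) :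
    covered Q hQ ⊆ range (n - 1) := by
  intro t ht
  obtain ⟨j, -, hj⟩ := mem_biUnion.1 ht
  have := ((Q j).max' (hQ j)).isLt
  simp only [mem_Ico] at hj
  exact mem_range.2 (by omega)

/-- A position not covered by any block is the maximum of the block containing it. -/
lemma card_range_sdiff_covered_le (Q : ι → Finset (Fin n)) (hQ : ∀ j, (Q j).Nonempty)
    (hcov : ∀ v, ∃ j, v ∈ Q j) : #(range n \ covered Q hQ) ≤ Fintype.card ι := by
  classical
  refine (card_le_card fun t ht => ?_).trans (card_image_le (s := univ)
    (f := fun j => ((Q j).max' (hQ j) : ℕ)))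
  obtain ⟨htn, htQ⟩ := mem_sdiff.1 ht
  obtain ⟨j, hj⟩ := hcov ⟨t, mem_range.1 htn⟩
  have hmin : ((Q j).min' (hQ j) : ℕ) ≤ t := min'_le (Q j) _ hj
  have hmax : t ≤ ((Q j).max' (hQ j) : ℕ) := le_max' (Q j) _ hj
  have : ¬ t < ((Q j).max' (hQ j) : ℕ) := fun h =>
    htQ (mem_biUnion.2 ⟨j, mem_univ j, mem_Ico.2 ⟨hmin, h⟩⟩)
  exact mem_image.2 ⟨j, mem_univ j, by omega⟩

end Covered

def cutBlock {n : ℕ} (e : ℕ → ℕ) (j : ℕ) : Finset (Fin n) :=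
  univ.filter fun v => e j ≤ v.val ∧ v.val < e (j + 1)

/-- Position `e j - 1` is the gap separating `cutBlock e (j - 1)` from `cutBlock e j`. -/
def cutGaps (e : ℕ → ℕ) (k : ℕ) : Finset ℕ :=
  (range k).image fun j => e (j + 1) - 1

section CutBlocks

variable {n k : ℕ} {e : ℕ → ℕ}

lemma mem_cutBlock {j : ℕ} {v : Fin n} : v ∈ cutBlock e j ↔ e j ≤ v ∧ (v : ℕ) < e (j + 1) := by
  simp [cutBlock]

lemma exists_mem_cutBlock (he0 : e 0 = 0) (v : Fin n) {m : ℕ} (hv : (v : ℕ) < e m) :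
    ∃ j < m, v ∈ cutBlock e j := by
  induction m with
  | zero => omega
  | succ m ih =>
    by_cases h : (v : ℕ) < e m
    · obtain ⟨j, hj, hvj⟩ := ih h
      exact ⟨j, by omega, hvj⟩
    · exact ⟨m, by omega, mem_cutBlock.2 ⟨by omega, hv⟩⟩

lemma isPartition_cutBlock (he0 : e 0 = 0) (hek : e k = n) (he : StrictMonoOn e (Set.Iic k)) :
    IsPartition fun j : Fin k => cutBlock (n := n) e j := by
  refine ⟨fun j => ?_, fun i j hij => ?_, fun v => ?_⟩
  · have hjn : e (j + 1) ≤ n :=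
      hek ▸ he.monotoneOn (Set.mem_Iic.2 (by omega)) Set.self_mem_Iic (by omega)
    have hj : e j < e (j + 1) := he (Set.mem_Iic.2 (by omega)) (Set.mem_Iic.2 (by omega)) (by omega)
    exact ⟨⟨e j, by omega⟩, mem_cutBlock.2 ⟨le_rfl, hj⟩⟩
  · have hsep : ∀ a b : Fin k, a < b → e (a + 1) ≤ e b := fun a b hab =>
      he.monotoneOn (Set.mem_Iic.2 (by omega)) (Set.mem_Iic.2 (by omega)) (Fin.lt_def.1 hab)
    refine disjoint_left.2 fun v hvi hvj => ?_
    rw [mem_cutBlock] at hvi hvj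
    rcases lt_or_gt_of_ne hij with h | h
    · have := hsep i j h; omega
    · have := hsep j i h; omega
  · obtain ⟨j, hj, hv⟩ := exists_mem_cutBlock he0 v (m := k) (by rw [hek]; exact v.isLt)
    exact ⟨⟨j, hj⟩, hv⟩

lemma rng_cutBlock {α : Fin n → ℝ} (hα : Monotone α) {j : ℕ} (hj : e j < e (j + 1))
    (hjn : e (j + 1) ≤ n) :
    rng α (cutBlock e j) = ∑ t ∈ Ico (e j) (e (j + 1) - 1), gap α t := by
  let a : Fin n := ⟨e j, by omega⟩
  let b : Fin n := ⟨e (j + 1) - 1, by omega⟩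
  have hab : a ≤ b := Fin.mk_le_mk.2 (by omega)
  have ha : IsLeast ((cutBlock e j : Finset (Fin n)) : Set (Fin n)) a :=
    ⟨mem_cutBlock.2 ⟨le_rfl, hj⟩, fun _ hv => (mem_cutBlock.1 hv).1⟩
  have hb : IsGreatest ((cutBlock e j : Finset (Fin n)) : Set (Fin n)) b :=
    ⟨mem_cutBlock.2 ⟨by simp [b]; omega, by simp [b]; omega⟩,
      fun v hv => show (v : ℕ) ≤ e (j + 1) - 1 by have := (mem_cutBlock.1 hv).2; omega⟩
  rw [rng_eq_of_isLeast_of_isGreatest hα ha hb, ← sum_gap_Ico hab]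

lemma cutGaps_injOn (he : StrictMonoOn e (Set.Iic k)) :
    Set.InjOn (fun j => e (j + 1) - 1) (range k) := fun a ha b hb hab => by
  have ha' := mem_range.1 ha
  have hb' := mem_range.1 hb
  have := he (Set.mem_Iic.2 (by omega : a ≤ k)) (Set.mem_Iic.2 (by omega : a + 1 ≤ k)) (by omega)
  have := he (Set.mem_Iic.2 (by omega : b ≤ k)) (Set.mem_Iic.2 (by omega : b + 1 ≤ k)) (by omega)
  have := he.injOn (Set.mem_Iic.2 (by omega : a + 1 ≤ k)) (Set.mem_Iic.2 (by omega : b + 1 ≤ k))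
    (by simp only at hab; omega)
  omega

lemma card_cutGaps (he : StrictMonoOn e (Set.Iic k)) : #(cutGaps e k) = k := by
  rw [cutGaps, card_image_of_injOn (cutGaps_injOn he), card_range]

lemma sum_rng_cutBlock {α : Fin n → ℝ} (hα : Monotone α) (he0 : e 0 = 0) (hek : e k = n)
    (he : StrictMonoOn e (Set.Iic k)) :
    ∑ j : Fin k, rng α (cutBlock e j) =
      ∑ t ∈ range n, gap α t - ∑ c ∈ cutGaps e k, gap α c := by
  have hstep : ∀ j < k, e j < e (j + 1) := fun j hj =>
    he (Set.mem_Iic.2 (by omega)) (Set.mem_Iic.2 (by omega)) (by omega)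
  have hblock : ∀ j ∈ range k, rng α (cutBlock e j) =
      ∑ t ∈ Ico (e j) (e (j + 1)), gap α t - gap α (e (j + 1) - 1) := by
    intro j hj
    have hjk := mem_range.1 hj
    have hjn : e (j + 1) ≤ n :=
      hek ▸ he.monotoneOn (Set.mem_Iic.2 (by omega)) Set.self_mem_Iic (by omega)
    have := hstep j hjk
    rw [rng_cutBlock hα this hjn, eq_sub_iff_add_eq, ← sum_Ico_succ_top (by omega),
      Nat.sub_add_cancel (by omega)]
  rw [Fin.sum_univ_eq_sum_range (fun j => rng α (cutBlock e j)), sum_congr rfl hblock,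
    sum_sub_distrib, sum_range_sum_Ico_eq _ fun j hj => (hstep j hj).le, he0, hek, range_zero,
    sum_empty, sub_zero, cutGaps, sum_image (cutGaps_injOn he)]

lemma gap_le_of_notMem_cutGaps {α : Fin n → ℝ} (hek : e k = n)
    (hgap : ∀ j, 1 ≤ j → j < k → ∀ s, 1 ≤ s → s < n →
      (∀ j', 1 ≤ j' → j' < k → e j' ≠ s) → gap α (s - 1) ≤ gap α (e j - 1))
    {u c : ℕ} (hu : u < n) (huC : u ∉ cutGaps e k) (hc : c ∈ cutGaps e k) (hcn : c ≠ n - 1) :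
    gap α u ≤ gap α c := by
  obtain ⟨j, hj, rfl⟩ := mem_image.1 hc
  have hjk := mem_range.1 hj
  have hnotcut : ∀ j', 1 ≤ j' → j' < k → e j' ≠ u + 1 := fun j' hj' hj'k heq =>
    huC (mem_image.2 ⟨j' - 1, mem_range.2 (by omega), by rw [Nat.sub_add_cancel hj', heq]; rfl⟩)
  have hun : u ≠ n - 1 := fun h =>
    huC (mem_image.2 ⟨k - 1, mem_range.2 (by omega), by rw [Nat.sub_add_cancel (by omega), hek, h]⟩)
  have hjk' : j + 1 ≠ k := fun h => hcn (by rw [h, hek])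
  simpa using hgap (j + 1) (by omega) (by omega) (u + 1) (by omega) (by omega) hnotcut

end CutBlocks

theorem stmt11_general (n : ℕ) (hn : 2 ≤ n) (α : Fin n → ℝ) (hα : StrictMono α)
    (k : ℕ) (e : ℕ → ℕ) (he0 : e 0 = 0) (hek : e k = n) (hmono : ∀ j < k, e j < e (j + 1))
    (hgap : ∀ j, 1 ≤ j → j < k → ∀ s, 1 ≤ s → s < n →
      (∀ j', 1 ≤ j' → j' < k → e j' ≠ s) → gap α (s - 1) ≤ gap α (e j - 1)) :
    IsPartition (fun j : Fin k => univ.filter (fun v : Fin n =>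
        e j.val ≤ v.val ∧ v.val < e (j.val + 1))) ∧
    ∀ Q : Fin k → Finset (Fin n), IsPartition Q →
      ∑ j : Fin k, rng α (univ.filter (fun v : Fin n =>
          e j.val ≤ v.val ∧ v.val < e (j.val + 1))) ≤
        ∑ j, rng α (Q j) := by
  have he : StrictMonoOn e (Set.Iic k) :=
    strictMonoOn_Iic_of_lt_succ fun j hj => by simpa using hmono j hj
  refine ⟨isPartition_cutBlock he0 hek he, fun Q ⟨hQne, _, hQcov⟩ => ?_⟩
  have hcov := covered_subset_range Q hQne
  have hcovn : covered Q hQne ⊆ range n := hcov.trans (range_subset_range.2 (Nat.sub_le n 1))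
  have hlast : n - 1 ∈ range n \ covered Q hQne :=
    mem_sdiff.2 ⟨mem_range.2 (by omega), fun h => by simpa using hcov h⟩
  have hexchange : ∑ t ∈ range n \ covered Q hQne, gap α t ≤ ∑ c ∈ cutGaps e k, gap α c := by
    refine sum_le_sum_of_card_le_of_le ?_ (fun c _ => gap_nonneg hα.monotone c)
      fun u hu c hc => gap_le_of_notMem_cutGaps hek hgap
        (mem_range.1 (mem_sdiff.1 (mem_sdiff.1 hu).1).1) (mem_sdiff.1 hu).2 (mem_sdiff.1 hc).1
        fun h => (mem_sdiff.1 hc).2 (h ▸ hlast)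
    rw [card_cutGaps he]
    simpa using card_range_sdiff_covered_le Q hQne hQcov
  calc ∑ j : Fin k, rng α (cutBlock e j)
      = ∑ t ∈ range n, gap α t - ∑ c ∈ cutGaps e k, gap α c :=
        sum_rng_cutBlock hα.monotone he0 hek he
    _ ≤ ∑ t ∈ range n, gap α t - ∑ t ∈ range n \ covered Q hQne, gap α t := by gcongr
    _ = ∑ t ∈ covered Q hQne, gap α t := by rw [← sum_sdiff hcovn]; ring
    _ ≤ ∑ j, rng α (Q j) := sum_gap_covered_le hα.monotone Q hQne

/-- If the cut points `e 1 < … < e (k-1)` are placed at the `k-1` largest gaps (every gap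
cut at is at least as large as every gap not cut at), then the resulting consecutive-block
`k`-partition minimizes `Σ range(Sⱼ)` over all `k`-partitions. A cut at position `c`
(with `1 ≤ c ≤ n-1`) separates elements `c-1` and `c`, whose gap is `gap α (c-1)`. -/
theorem stmt11 (n : ℕ) (hn : 2 ≤ n) (α : Fin n → ℝ) (hα : StrictMono α)
    (k : ℕ) (hk : 2 ≤ k) (hkn : k ≤ n)
    (e : ℕ → ℕ) (he0 : e 0 = 0) (hek : e k = n) (hmono : ∀ j < k, e j < e (j + 1))
    (hgap : ∀ j, 1 ≤ j → j < k → ∀ s, 1 ≤ s → s < n →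
      (∀ j', 1 ≤ j' → j' < k → e j' ≠ s) → gap α (s - 1) ≤ gap α (e j - 1)) :
    IsPartition (fun j : Fin k => univ.filter (fun v : Fin n =>
        e j.val ≤ v.val ∧ v.val < e (j.val + 1))) ∧
    ∀ Q : Fin k → Finset (Fin n), IsPartition Q →
      ∑ j : Fin k, rng α (univ.filter (fun v : Fin n =>
          e j.val ≤ v.val ∧ v.val < e (j.val + 1))) ≤
        ∑ j, rng α (Q j) :=
  stmt11_general n hn α hα k e he0 hek hmono hgap
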